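/- Fix an integer d ≥ 1, T > 0, and functions b, σ : {1,…,d} × ℝ → ℝ satisfying the Lipschitz condition |b(i,x)−b(i,y)| + |σ(i,x)−σ(i,y)| ≤ K|x−y| for some K > 0 and all i, x, y, and assume inf_{i,x} σ(i,x)² > 0. Let φ ∈ ℍ_T, let ν ∈ 𝕄_T, and let (ν_n) be a sequence in 𝕄_T, with kernels K_ν and K_n respectively, such that for every i, K_n(s,i) → K_ν(s,i) as n → ∞ for Lebesgue-almost every s ∈ [0,T]. Then I_T(φ, ν_n) → I_T(φ, ν) as n → ∞. -/

import Mathlib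

/-!
The integrand of `I_T(φ, ν_n)` is a continuous function of the weight vector `K_n(t, ·)`, so it
converges a.e. Since the weights lie in the standard simplex, the denominator is at least
`c = inf σ²` and the drift term is bounded by a bound `B` of `b` on the compact set `φ([0,T])`,
so the integrands are dominated by `(2 φ'² + 2 B²) / c`, which is integrable because `φ' ∈ L²`.
Dominated convergence concludes.
-/

open MeasureTheory Filter Topology

/-- A kernel on `[0,T] × {1,…,d}`. -/
def IsMKernel (d : ℕ) (T : ℝ) (K : ℝ → Fin d → ℝ) : Prop :=
  (∀ i : Fin d, Measurable fun s => K s i) ∧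
    ∀ s ∈ Set.Icc (0:ℝ) T, (∀ i : Fin d, 0 ≤ K s i) ∧ ∑ i : Fin d, K s i = 1

/-- `φ ∈ ℍ_T`: `φ` is absolutely continuous on `[0,T]` with `φ(0)=0` and derivative
`φd` which is measurable and square-integrable on `[0,T]`. -/
def MemHT (T : ℝ) (φ φd : ℝ → ℝ) : Prop :=
  φ 0 = 0 ∧ Measurable φd ∧ IntegrableOn (fun s => (φd s) ^ 2) (Set.Icc (0:ℝ) T) ∧
    ∀ t ∈ Set.Icc (0:ℝ) T, φ t = ∫ s in (0:ℝ)..t, φd s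

/-- The Freidlin–Wentzell type rate function
`I_T(φ,ν) = (1/2)∫₀ᵀ (φ'(t) − b̂(ν,φ(t)))² / σ̂²(ν,φ(t)) dt`, expressed through the
kernel `K` of `ν`. -/
noncomputable def IT (d : ℕ) (T : ℝ) (b σ : Fin d → ℝ → ℝ) (φ φd : ℝ → ℝ)
    (K : ℝ → Fin d → ℝ) : ℝ :=
  (1/2) * ∫ t in (0:ℝ)..T,
    (φd t - ∑ i : Fin d, b i (φ t) * K t i) ^ 2 /
      (∑ i : Fin d, (σ i (φ t)) ^ 2 * K t i)

section WeightedSums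

variable {ι : Type*} [Fintype ι] {w a : ι → ℝ}

theorem abs_sum_mul_le_of_mem_stdSimplex (hw : w ∈ stdSimplex ℝ ι) {B : ℝ}
    (ha : ∀ i, |a i| ≤ B) : |∑ i, a i * w i| ≤ B :=
  calc |∑ i, a i * w i| ≤ ∑ i, |a i| * w i := by
        refine (Finset.abs_sum_le_sum_abs _ _).trans_eq ?_
        simp only [abs_mul, abs_of_nonneg (hw.1 _)]
    _ ≤ ∑ i, B * w i := Finset.sum_le_sum fun i _ => mul_le_mul_of_nonneg_right (ha i) (hw.1 i)
    _ = B := by rw [← Finset.mul_sum, hw.2, mul_one]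

theorem le_sum_mul_of_mem_stdSimplex (hw : w ∈ stdSimplex ℝ ι) {c : ℝ}
    (ha : ∀ i, c ≤ a i) : c ≤ ∑ i, a i * w i :=
  calc c = ∑ i, c * w i := by rw [← Finset.mul_sum, hw.2, mul_one]
    _ ≤ ∑ i, a i * w i := Finset.sum_le_sum fun i _ => mul_le_mul_of_nonneg_right (ha i) (hw.1 i)

end WeightedSums

theorem Continuous.of_abs_sub_le {f : ℝ → ℝ} {C : ℝ} (h : ∀ x y, |f x - f y| ≤ C * |x - y|) :
    Continuous f :=
  (LipschitzWith.of_dist_le' (K := C) fun x y => by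
    simpa only [Real.dist_eq] using h x y).continuous

/-- The integrand of `I_T` at a time `t`, as a function of `x = φ'(t)`, the drift and diffusion
coefficients `a i = b(i, φ(t))`, `s i = σ(i, φ(t))²` and the kernel weights `w i = K(t, i)`. -/
noncomputable def rateIntegrand {ι : Type*} [Fintype ι] (x : ℝ) (a s w : ι → ℝ) : ℝ :=
  (x - ∑ i, a i * w i) ^ 2 / ∑ i, s i * w i

section RateIntegrand

variable {ι : Type*} [Fintype ι]

theorem abs_rateIntegrand_le {x B c : ℝ} {a s w : ι → ℝ} (hc : 0 < c)
    (hw : w ∈ stdSimplex ℝ ι) (ha : ∀ i, |a i| ≤ B) (hs : ∀ i, c ≤ s i) :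
    |rateIntegrand x a s w| ≤ (2 * x ^ 2 + 2 * B ^ 2) / c := by
  have hden : c ≤ ∑ i, s i * w i := le_sum_mul_of_mem_stdSimplex hw hs
  have hdrift : (∑ i, a i * w i) ^ 2 ≤ B ^ 2 :=
    sq_le_sq.2 ((abs_sum_mul_le_of_mem_stdSimplex hw ha).trans (le_abs_self B))
  rw [rateIntegrand, abs_of_nonneg (div_nonneg (sq_nonneg _) (hc.le.trans hden))]
  calc (x - ∑ i, a i * w i) ^ 2 / ∑ i, s i * w i ≤ (x - ∑ i, a i * w i) ^ 2 / c :=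
        div_le_div_of_nonneg_left (sq_nonneg _) hc hden
    _ ≤ (2 * x ^ 2 + 2 * B ^ 2) / c := by
        gcongr
        nlinarith [sq_nonneg (x + ∑ i, a i * w i), hdrift]

theorem continuousAt_rateIntegrand {x : ℝ} {a s w : ι → ℝ} (hw : ∑ i, s i * w i ≠ 0) :
    ContinuousAt (rateIntegrand x a s) w := by
  unfold rateIntegrand
  fun_prop (disch := exact hw)

variable {α : Type*} [MeasurableSpace α] {μ : Measure α}

theorem AEMeasurable.rateIntegrand {x : α → ℝ} {a s w : α → ι → ℝ} (hx : AEMeasurable x μ)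
    (ha : ∀ i, AEMeasurable (fun t => a t i) μ) (hs : ∀ i, AEMeasurable (fun t => s t i) μ)
    (hw : ∀ i, AEMeasurable (fun t => w t i) μ) :
    AEMeasurable (fun t => _root_.rateIntegrand (x t) (a t) (s t) (w t)) μ := by
  unfold _root_.rateIntegrand
  refine ((hx.sub ?_).pow_const 2).div ?_
  · exact Finset.aemeasurable_fun_sum _ fun i _ => (ha i).mul (hw i)
  · exact Finset.aemeasurable_fun_sum _ fun i _ => (hs i).mul (hw i)

theorem tendsto_integral_rateIntegrand [IsFiniteMeasure μ] {x : α → ℝ} {a s w : α → ι → ℝ}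
    {wn : ℕ → α → ι → ℝ} {B c : ℝ} (hc : 0 < c) (hx : AEMeasurable x μ)
    (hx2 : Integrable (fun t => x t ^ 2) μ)
    (ha : ∀ i, AEMeasurable (fun t => a t i) μ) (hs : ∀ i, AEMeasurable (fun t => s t i) μ)
    (hwn : ∀ n i, AEMeasurable (fun t => wn n t i) μ)
    (haB : ∀ᵐ t ∂μ, ∀ i, |a t i| ≤ B) (hsc : ∀ᵐ t ∂μ, ∀ i, c ≤ s t i)
    (hw_mem : ∀ᵐ t ∂μ, w t ∈ stdSimplex ℝ ι) (hwn_mem : ∀ n, ∀ᵐ t ∂μ, wn n t ∈ stdSimplex ℝ ι)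
    (hlim : ∀ᵐ t ∂μ, Tendsto (fun n => wn n t) atTop (𝓝 (w t))) :
    Tendsto (fun n => ∫ t, rateIntegrand (x t) (a t) (s t) (wn n t) ∂μ) atTop
      (𝓝 (∫ t, rateIntegrand (x t) (a t) (s t) (w t) ∂μ)) := by
  refine tendsto_integral_of_dominated_convergence (fun t => (2 * x t ^ 2 + 2 * B ^ 2) / c)
    (fun n => (hx.rateIntegrand ha hs (hwn n)).aestronglyMeasurable)
    (((hx2.const_mul 2).add (integrable_const _)).div_const c) (fun n => ?_) ?_
  · filter_upwards [haB, hsc, hwn_mem n] with t htB htc htw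
    exact abs_rateIntegrand_le hc htw htB htc
  · filter_upwards [hsc, hw_mem, hlim] with t htc htw htlim
    have hden : c ≤ ∑ i, s t i * w t i := le_sum_mul_of_mem_stdSimplex htw htc
    exact (continuousAt_rateIntegrand (hc.trans_le hden).ne').tendsto.comp htlim

end RateIntegrand

theorem MemHT.integrableOn {T : ℝ} {φ φd : ℝ → ℝ} (hφ : MemHT T φ φd) :
    IntegrableOn φd (Set.Icc 0 T) :=
  ((memLp_two_iff_integrable_sq hφ.2.1.aestronglyMeasurable).2 hφ.2.2.1).integrable
    one_le_two

theorem MemHT.continuousOn {T : ℝ} {φ φd : ℝ → ℝ} (hT : 0 ≤ T) (hφ : MemHT T φ φd) :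
    ContinuousOn φ (Set.Icc 0 T) := by
  have hprim := intervalIntegral.continuousOn_primitive_interval (μ := volume)
    ((Set.uIcc_of_le hT).symm ▸ hφ.integrableOn)
  rw [Set.uIcc_of_le hT] at hprim
  exact hprim.congr hφ.2.2.2

theorem IT_eq_setIntegral_Icc {d : ℕ} {T : ℝ} (hT : 0 ≤ T) (b σ : Fin d → ℝ → ℝ)
    (φ φd : ℝ → ℝ) (K : ℝ → Fin d → ℝ) :
    IT d T b σ φ φd K = (1 / 2) * ∫ t in Set.Icc 0 T,
      rateIntegrand (φd t) (fun i => b i (φ t)) (fun i => σ i (φ t) ^ 2) (K t) := by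
  rw [IT, intervalIntegral.integral_of_le hT, integral_Icc_eq_integral_Ioc]
  rfl

theorem IT_continuous (d : ℕ) (T : ℝ) (hT : 0 < T)
    (b σ : Fin d → ℝ → ℝ) (C : ℝ)
    (hlip : ∀ i : Fin d, ∀ x y : ℝ,
      |b i x - b i y| + |σ i x - σ i y| ≤ C * |x - y|)
    (hσ : ∃ c : ℝ, 0 < c ∧ ∀ i : Fin d, ∀ x : ℝ, c ≤ (σ i x) ^ 2)
    (φ φd : ℝ → ℝ) (hφ : MemHT T φ φd)
    (K : ℝ → Fin d → ℝ) (Kn : ℕ → ℝ → Fin d → ℝ)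
    (hK : IsMKernel d T K) (hKn : ∀ n : ℕ, IsMKernel d T (Kn n))
    (hconv : ∀ i : Fin d,
      ∀ᵐ s ∂(volume.restrict (Set.Icc (0:ℝ) T)),
        Tendsto (fun n => Kn n s i) atTop (𝓝 (K s i))) :
    Tendsto (fun n => IT d T b σ φ φd (Kn n)) atTop (𝓝 (IT d T b σ φ φd K)) := by
  obtain ⟨c, hc, hσc⟩ := hσ
  have hb_cont (i : Fin d) : Continuous (b i) := .of_abs_sub_le fun x y =>
    (le_add_of_nonneg_right (abs_nonneg _)).trans (hlip i x y)
  have hσ_cont (i : Fin d) : Continuous (σ i) := .of_abs_sub_le fun x y =>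
    (le_add_of_nonneg_left (abs_nonneg _)).trans (hlip i x y)
  have hφ_cont := hφ.continuousOn hT.le
  have hφ_meas : AEMeasurable φ (volume.restrict (Set.Icc 0 T)) :=
    hφ_cont.aemeasurable measurableSet_Icc
  obtain ⟨B, hB⟩ := isCompact_Icc.exists_bound_of_continuousOn (f := fun t i => b i (φ t))
    (continuousOn_pi.2 fun i => (hb_cont i).comp_continuousOn hφ_cont)
  simp_rw [IT_eq_setIntegral_Icc hT.le]
  refine (tendsto_integral_rateIntegrand hc hφ.2.1.aemeasurable hφ.2.2.1
    (fun i => (hb_cont i).measurable.comp_aemeasurable hφ_meas)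
    (fun i => ((hσ_cont i).measurable.comp_aemeasurable hφ_meas).pow_const 2)
    (fun n i => ((hKn n).1 i).aemeasurable)
    (ae_restrict_of_forall_mem measurableSet_Icc fun t ht i =>
      (norm_le_pi_norm _ i).trans (hB t ht))
    (ae_of_all _ fun t i => hσc i (φ t))
    (ae_restrict_of_forall_mem measurableSet_Icc hK.2)
    (fun n => ae_restrict_of_forall_mem measurableSet_Icc (hKn n).2) ?_).const_mul _
  filter_upwards [ae_all_iff.2 hconv] with t ht using tendsto_pi_nhds.2 ht
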